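/- arXiv:1206.6354 — 5 statements merged into one kernel-verified Lean document; each statement's English description precedes it below -/
import Mathlib

section
/- For every integer m ≥ 1 and every integer ℓ ≥ 0, r_{m,ℓ} = ∑_{k=0}^{ℓ} C(ℓ,k) · r_k · r_{m-1, ℓ-k}, where C(ℓ,k) is the binomial coefficient. -/
/-!
Single out one of the `m + 1` sections. A barred preferential arrangement is then the choice of
the set `S` of elements placed in that section, a preferential arrangement of `S`, and a barred
preferential arrangement of the complement with `m - 1` bars. Summing over `S` according to its
size gives the binomial convolution.
-/

/-- `IsBPA m ℓ f` : `f` encodes a barred preferential arrangement of `[ℓ]` with `m` bars.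
Each element of `[ℓ]` is assigned a section (one of the `m + 1` sections determined by the
`m` bars) together with a rank inside its section (ties are allowed: elements of the same
section with the same rank form a block); within each section the set of ranks actually used
must be an initial segment `{0, …, t-1}`, so that `f` determines, for each section, an
ordered partition of the elements assigned to it into nonempty blocks. -/
def IsBPA (m ℓ : ℕ) (f : Fin ℓ → Fin (m + 1) × Fin ℓ) : Prop :=
  ∀ x : Fin ℓ, ∀ r : Fin ℓ, r < (f x).2 → ∃ y : Fin ℓ, (f y).1 = (f x).1 ∧ (f y).2 = r

instance (m ℓ : ℕ) : DecidablePred (IsBPA m ℓ) := fun f => by unfold IsBPA; infer_instance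

/-- `bpa m ℓ` : the number of barred preferential arrangements of `[ℓ]` with `m` bars.
In particular `bpa 0 ℓ` is the number of preferential arrangements of `[ℓ]`
(the Fubini / ordered Bell number `r_ℓ`). -/
def bpa (m ℓ : ℕ) : ℕ :=
  Fintype.card { f : Fin ℓ → Fin (m + 1) × Fin ℓ // IsBPA m ℓ f }

open Finset Function

variable {α β σ τ : Type*} {L : ℕ}

/-- `IsBPA`, for an arbitrary ground set `α`, type of sections `σ` and bound `L` on the ranks. -/
def IsArrangement (f : α → σ × Fin L) : Prop :=
  ∀ x, ∀ r : Fin L, r < (f x).2 → ∃ y, (f y).1 = (f x).1 ∧ (f y).2 = r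

abbrev Arrangement (α σ : Type*) (L : ℕ) := {f : α → σ × Fin L // IsArrangement f}

namespace IsArrangement

theorem rank_lt_card [Fintype α] {f : α → σ × Fin L} (hf : IsArrangement f) (x : α) :
    ((f x).2 : ℕ) < Fintype.card α := by
  have hrealized : ∀ i : Fin ((f x).2 + 1), ∃ y, ((f y).2 : ℕ) = i := by
    intro i
    rcases (Nat.lt_succ_iff.mp i.isLt).lt_or_eq with hi | hi
    · obtain ⟨y, -, hy⟩ := hf x ⟨i, hi.trans (f x).2.isLt⟩ hi
      exact ⟨y, by rw [hy]⟩
    · exact ⟨x, hi.symm⟩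
  choose φ hφ using hrealized
  have hφinj : Injective φ := fun i j hij => Fin.ext (by rw [← hφ i, ← hφ j, hij])
  simpa using Fintype.card_le_of_injective φ hφinj

theorem comp_surjective_iff {f : α → σ × Fin L} {e : β → α} (he : Surjective e) :
    IsArrangement (f ∘ e) ↔ IsArrangement f := by
  constructor
  · intro hf x r hr
    obtain ⟨x, rfl⟩ := he x
    obtain ⟨y, hy⟩ := hf x r hr
    exact ⟨e y, hy⟩
  · intro hf x r hr
    obtain ⟨y, hy⟩ := hf (e x) r hr
    obtain ⟨y, rfl⟩ := he y
    exact ⟨y, hy⟩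

theorem map_section_iff {f : α → σ × Fin L} {g : σ → τ} (hg : Injective g) :
    IsArrangement (Prod.map g id ∘ f) ↔ IsArrangement f := by
  simp only [IsArrangement, comp_apply, Prod.map_fst, Prod.map_snd, id, hg.eq_iff]

theorem restrict {f : α → σ × Fin L} (hf : IsArrangement f) {p : α → Prop}
    (hp : ∀ x y, (f x).1 = (f y).1 → p x → p y) :
    IsArrangement (fun x : Subtype p => f x) := fun x r hr => by
  obtain ⟨y, h₁, h₂⟩ := hf x r hr
  exact ⟨⟨y, hp _ _ h₁.symm x.2⟩, h₁, h₂⟩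

end IsArrangement

namespace Arrangement

def congr (eα : α ≃ β) (eσ : σ ≃ τ) : Arrangement α σ L ≃ Arrangement β τ L :=
  Equiv.subtypeEquiv (eα.arrowCongr (eσ.prodCongr (Equiv.refl _))) fun _ =>
    ((IsArrangement.comp_surjective_iff eα.symm.surjective).trans
      (IsArrangement.map_section_iff eσ.injective)).symm

def castRank [Fintype α] {L' : ℕ} (h : Fintype.card α ≤ L') (f : Arrangement α σ L) :
    Arrangement α σ L' :=
  ⟨fun x => ((f.1 x).1, ⟨(f.1 x).2, (f.2.rank_lt_card x).trans_le h⟩), fun x r hr => by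
    obtain ⟨y, h₁, h₂⟩ := f.2 x ⟨r, (Fin.lt_def.1 hr).trans (f.1 x).2.isLt⟩ hr
    exact ⟨y, h₁, Fin.ext (by simp [h₂])⟩⟩

/-- Ranks never exceed the size of the ground set, so the bound `L` is irrelevant once it is
large enough. -/
def castRankEquiv [Fintype α] {L' : ℕ} (h : Fintype.card α ≤ L) (h' : Fintype.card α ≤ L') :
    Arrangement α σ L ≃ Arrangement α σ L' where
  toFun := castRank h'
  invFun := castRank h
  left_inv _ := rfl
  right_inv _ := rfl

end Arrangement

theorem bpa_eq_natCard (m ℓ : ℕ) : bpa m ℓ = Nat.card (Arrangement (Fin ℓ) (Fin (m + 1)) ℓ) :=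
  Nat.card_eq_fintype_card.symm

theorem natCard_arrangement_eq_bpa [Fintype α] {m : ℕ} (e : σ ≃ Fin (m + 1))
    (h : Fintype.card α ≤ L) : Nat.card (Arrangement α σ L) = bpa m (Fintype.card α) := by
  rw [bpa_eq_natCard]
  exact Nat.card_congr ((Arrangement.castRankEquiv h le_rfl).trans
    (Arrangement.congr (Fintype.equivFin α) e))

section Split

variable [Fintype α] [DecidableEq α]

def leftPart (f : α → (σ ⊕ τ) × Fin L) : Finset α := {x | (f x).1.isLeft}

namespace Arrangement

variable {s : Finset α}

def leftRestrict (f : Arrangement α (σ ⊕ τ) L) (hs : ∀ x, (f.1 x).1.isLeft ↔ x ∈ s) :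
    Arrangement s σ L :=
  ⟨fun x => ((f.1 x).1.getLeft ((hs x).2 x.2), (f.1 x).2), by
    rw [← IsArrangement.map_section_iff Sum.inl_injective]
    convert f.2.restrict (p := (· ∈ s)) fun x y hxy hx => (hs y).1 (hxy ▸ (hs x).2 hx) using 1
    exact funext fun x => Prod.ext (Sum.inl_getLeft _ _) rfl⟩

def rightRestrict (f : Arrangement α (σ ⊕ τ) L) (hs : ∀ x, (f.1 x).1.isLeft ↔ x ∈ s) :
    Arrangement ↥sᶜ τ L :=
  ⟨fun x => ((f.1 x).1.getRight
      (Sum.not_isLeft.1 fun h => mem_compl.1 x.2 ((hs x).1 h)), (f.1 x).2), by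
    rw [← IsArrangement.map_section_iff Sum.inr_injective]
    convert f.2.restrict (p := (· ∈ sᶜ)) (fun x y hxy hx => mem_compl.2 fun hy =>
      mem_compl.1 hx ((hs x).1 (hxy ▸ (hs y).2 hy))) using 1
    exact funext fun x => Prod.ext (Sum.inr_getRight _ _) rfl⟩

def glue (g : Arrangement s σ L) (h : Arrangement ↥sᶜ τ L) : Arrangement α (σ ⊕ τ) L :=
  ⟨fun x => if hx : x ∈ s then Prod.map Sum.inl id (g.1 ⟨x, hx⟩)
    else Prod.map Sum.inr id (h.1 ⟨x, mem_compl.2 hx⟩), by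
    intro x r hr
    by_cases hx : x ∈ s
    · simp only [dif_pos hx] at hr ⊢
      obtain ⟨y, h₁, h₂⟩ := g.2 ⟨x, hx⟩ r hr
      exact ⟨y, by simp [y.2, h₁], by simp [y.2, h₂]⟩
    · simp only [dif_neg hx] at hr ⊢
      obtain ⟨y, h₁, h₂⟩ := h.2 ⟨x, mem_compl.2 hx⟩ r hr
      have hy : y.1 ∉ s := mem_compl.1 y.2
      exact ⟨y, by simp [hy, h₁], by simp [hy, h₂]⟩⟩

def splitEquiv (s : Finset α) :
    {f : Arrangement α (σ ⊕ τ) L // ∀ x, (f.1 x).1.isLeft ↔ x ∈ s} ≃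
      Arrangement s σ L × Arrangement ↥sᶜ τ L where
  toFun f := (leftRestrict f.1 f.2, rightRestrict f.1 f.2)
  invFun gh := ⟨glue gh.1 gh.2, fun x => by by_cases hx : x ∈ s <;> simp [glue, hx]⟩
  left_inv f := by
    refine Subtype.ext (Subtype.ext (funext fun x => ?_))
    by_cases hx : x ∈ s
    · simp [glue, leftRestrict, hx]
    · simp [glue, rightRestrict, hx]
  right_inv gh := by
    refine Prod.ext (Subtype.ext (funext fun x => ?_)) (Subtype.ext (funext fun x => ?_))
    · simp [glue, leftRestrict]
    · simp [glue, rightRestrict, mem_compl.1 x.2]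

end Arrangement

theorem natCard_arrangement_sum [Finite σ] [Finite τ] :
    Nat.card (Arrangement α (σ ⊕ τ) L) =
      ∑ s : Finset α, Nat.card (Arrangement s σ L) * Nat.card (Arrangement ↥sᶜ τ L) := by
  rw [← Nat.card_congr (Equiv.sigmaFiberEquiv fun f : Arrangement α (σ ⊕ τ) L => leftPart f.1),
    Nat.card_sigma]
  refine sum_congr rfl fun s _ => ?_
  rw [← Nat.card_prod]
  refine Nat.card_congr ((Equiv.subtypeEquivRight fun f => ?_).trans (Arrangement.splitEquiv s))
  simp [leftPart, Finset.ext_iff, Iff.comm]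

end Split

/-- For every `m ≥ 1` and `ℓ ≥ 0`,
`r_{m,ℓ} = ∑_{k=0}^{ℓ} C(ℓ,k) · r_k · r_{m-1, ℓ-k}`. -/
theorem bpa_eq_binomial_convolution (m ℓ : ℕ) (hm : 1 ≤ m) :
    bpa m ℓ = ∑ k ∈ Finset.range (ℓ + 1), Nat.choose ℓ k * bpa 0 k * bpa (m - 1) (ℓ - k) := by
  obtain ⟨n, rfl⟩ := Nat.exists_eq_add_of_le' hm
  rw [Nat.add_sub_cancel]
  have hle (s : Finset (Fin ℓ)) : Fintype.card s ≤ ℓ := by simpa using card_le_univ s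
  calc bpa (n + 1) ℓ = Nat.card (Arrangement (Fin ℓ) (Fin 1 ⊕ Fin (n + 1)) ℓ) := by
        rw [bpa_eq_natCard]
        exact Nat.card_congr
          (Arrangement.congr (Equiv.refl _) ((Equiv.sumComm _ _).trans finSumFinEquiv)).symm
    _ = ∑ s : Finset (Fin ℓ), bpa 0 #s * bpa n (ℓ - #s) := by
        rw [natCard_arrangement_sum]
        refine sum_congr rfl fun s _ => ?_
        rw [natCard_arrangement_eq_bpa (Equiv.refl _) (hle s),
          natCard_arrangement_eq_bpa (Equiv.refl _) (hle sᶜ)]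
        simp
    _ = _ := by
        rw [← powerset_univ, sum_powerset_apply_card (fun k => bpa 0 k * bpa n (ℓ - k))]
        simp [mul_assoc]
end

section
/- For every integer m ≥ 0 and every complex number z with |z| < log 2, the series ∑_{ℓ ≥ 0} r_{m,ℓ} · z^ℓ / ℓ! converges and its sum equals 1/(2 - e^z)^{m+1}. -/
/-!
Splitting off the last section shows `r_{m+1,n} = ∑ₖ C(n,k) r_k r_{m,n-k}`, so the exponential
generating function of `r_{m+1,·}` is the product of those of `r_{0,·}` and `r_{m,·}`. Splitting off
the first block of a preferential arrangement gives `r_{n+1} = ∑_{k ≥ 1} C(n+1,k) r_{n+1-k}`, i.e.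
`F = 1 + (e^z - 1) F` for `F(z) = ∑ r_n z^n / n!`, hence `F = 1 / (2 - e^z)`.
The same recurrence gives `r_n ≤ n! / (log 2)^n` by induction, because
`∑_{k ≥ 1} (log 2)^k / k! = e^{log 2} - 1 = 1`; so for `|z| < log 2` every series involved converges
absolutely and the Cauchy products are legitimate.
-/

open Finset
open scoped Nat

def binomConv {R : Type*} [Semiring R] (a b : ℕ → R) (n : ℕ) : R :=
  ∑ p ∈ antidiagonal n, (n.choose p.1 : R) * a p.1 * b p.2

@[simp, norm_cast]
lemma Nat.cast_binomConv {R : Type*} [Semiring R] (a b : ℕ → ℕ) (n : ℕ) :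
    ((binomConv a b n : ℕ) : R) = binomConv (fun k => (a k : R)) (fun k => (b k : R)) n := by
  simp [binomConv]

lemma Finset.sum_univ_card_card_sub {α M : Type*} [Fintype α] [AddCommMonoid M]
    (f : ℕ → ℕ → M) :
    ∑ S : Finset α, f #S (Fintype.card α - #S) =
      ∑ p ∈ antidiagonal (Fintype.card α), (Fintype.card α).choose p.1 • f p.1 p.2 := by
  classical
  rw [← powerset_univ, sum_powerset_apply_card (fun k => f k (Fintype.card α - k)), card_univ,
    Nat.sum_antidiagonal_eq_sum_range_succ (fun i j => (Fintype.card α).choose i • f i j)]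

/-- The encoding of `IsBPA` over an arbitrary index type, with ranks in `ℕ` so that restricting to
a subset needs no re-bounding of the ranks. -/
structure BarredArrangement (m : ℕ) (α : Type*) where
  sec : α → Fin (m + 1)
  rank : α → ℕ
  exists_of_lt_rank : ∀ x, ∀ r < rank x, ∃ y, sec y = sec x ∧ rank y = r

attribute [ext] BarredArrangement

namespace BarredArrangement

variable {m : ℕ} {α β : Type*}

lemma rank_lt_card [Fintype α] (f : BarredArrangement m α) (x : α) :
    f.rank x < Fintype.card α := by
  have hsub : range (f.rank x + 1) ⊆ univ.image f.rank := by
    intro r hr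
    rcases (Nat.lt_succ_iff.1 (mem_range.1 hr)).lt_or_eq with h | rfl
    · obtain ⟨y, -, rfl⟩ := f.exists_of_lt_rank x r h
      exact mem_image_of_mem _ (mem_univ y)
    · exact mem_image_of_mem _ (mem_univ x)
  simpa using (card_le_card hsub).trans card_image_le

variable (m) in
def equivIsBPA (ℓ : ℕ) :
    { f : Fin ℓ → Fin (m + 1) × Fin ℓ // IsBPA m ℓ f } ≃ BarredArrangement m (Fin ℓ) where
  toFun f := ⟨fun x => (f.1 x).1, fun x => (f.1 x).2, fun x r hr => by
    obtain ⟨y, hsec, hrank⟩ := f.2 x ⟨r, hr.trans (f.1 x).2.2⟩ hr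
    exact ⟨y, hsec, congrArg Fin.val hrank⟩⟩
  invFun g := ⟨fun x => (g.sec x, ⟨g.rank x, by simpa using g.rank_lt_card x⟩), fun x r hr => by
    obtain ⟨y, hsec, hrank⟩ := g.exists_of_lt_rank x r hr
    exact ⟨y, hsec, Fin.ext hrank⟩⟩
  left_inv f := rfl
  right_inv g := rfl

def congr (e : α ≃ β) : BarredArrangement m α ≃ BarredArrangement m β where
  toFun f := ⟨f.sec ∘ e.symm, f.rank ∘ e.symm, fun x r hr => by
    obtain ⟨y, hsec, hrank⟩ := f.exists_of_lt_rank _ r hr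
    exact ⟨e y, by simpa using hsec, by simpa using hrank⟩⟩
  invFun f := ⟨f.sec ∘ e, f.rank ∘ e, fun x r hr => by
    obtain ⟨y, hsec, hrank⟩ := f.exists_of_lt_rank _ r hr
    exact ⟨e.symm y, by simpa using hsec, by simpa using hrank⟩⟩
  left_inv f := by ext <;> simp
  right_inv f := by ext <;> simp

instance [Finite α] : Finite (BarredArrangement m α) := by
  cases nonempty_fintype α
  exact Finite.of_equiv _ ((equivIsBPA m _).trans (congr (Fintype.equivFin α).symm))

lemma natCard_eq_bpa [Fintype α] : Nat.card (BarredArrangement m α) = bpa m (Fintype.card α) := by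
  rw [bpa, ← Nat.card_eq_fintype_card, Nat.card_congr (equivIsBPA m _)]
  exact Nat.card_congr (congr (Fintype.equivFin α))

end BarredArrangement

lemma bpa_zero_right (m : ℕ) : bpa m 0 = 1 := by
  rw [← Fintype.card_fin 0, ← BarredArrangement.natCard_eq_bpa, Nat.card_eq_one_iff_unique]
  refine ⟨⟨fun f g => ?_⟩, ⟨⟨finZeroElim, finZeroElim, fun x => x.elim0⟩⟩⟩
  ext x <;> exact x.elim0

namespace BarredArrangement

variable {m : ℕ} {α : Type*} [Fintype α] {S : Finset α}

section LastSection

def lastSection (f : BarredArrangement (m + 1) α) : Finset α := {x | f.sec x = Fin.last (m + 1)}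

lemma mem_iff_of_lastSection_eq {f : BarredArrangement (m + 1) α} (hf : f.lastSection = S) {x : α} :
    x ∈ S ↔ f.sec x = Fin.last (m + 1) := by
  simp [← hf, lastSection]

variable [DecidableEq α]

def glueLast (g : BarredArrangement 0 S) (h : BarredArrangement m {x // x ∉ S}) :
    BarredArrangement (m + 1) α where
  sec x := if hx : x ∈ S then Fin.last (m + 1) else (h.sec ⟨x, hx⟩).castSucc
  rank x := if hx : x ∈ S then g.rank ⟨x, hx⟩ else h.rank ⟨x, hx⟩
  exists_of_lt_rank x r hr := by
    by_cases hx : x ∈ S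
    · simp only [hx, dite_true] at hr ⊢
      obtain ⟨y, -, rfl⟩ := g.exists_of_lt_rank ⟨x, hx⟩ r hr
      exact ⟨y, by simp [y.2]⟩
    · simp only [hx, dite_false] at hr ⊢
      obtain ⟨y, hsec, rfl⟩ := h.exists_of_lt_rank _ r hr
      exact ⟨y, by simp [y.2, hsec]⟩

lemma lastSection_glueLast (g : BarredArrangement 0 S) (h : BarredArrangement m {x // x ∉ S}) :
    (glueLast g h).lastSection = S := by
  ext x
  by_cases hx : x ∈ S <;> simp [lastSection, glueLast, hx, Fin.castSucc_ne_last]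

def restrictLast (f : BarredArrangement (m + 1) α) (hf : f.lastSection = S) :
    BarredArrangement 0 S where
  sec _ := 0
  rank x := f.rank x
  exists_of_lt_rank x r hr := by
    obtain ⟨y, hsec, rfl⟩ := f.exists_of_lt_rank x r hr
    have hy : (y : α) ∈ S := by
      rw [mem_iff_of_lastSection_eq hf, hsec, ← mem_iff_of_lastSection_eq hf]; exact x.2
    exact ⟨⟨y, hy⟩, rfl, rfl⟩

def restrictInit (f : BarredArrangement (m + 1) α) (hf : f.lastSection = S) :
    BarredArrangement m {x // x ∉ S} where
  sec x := (f.sec x).castPred fun h => x.2 ((mem_iff_of_lastSection_eq hf).2 h)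
  rank x := f.rank x
  exists_of_lt_rank x r hr := by
    obtain ⟨y, hsec, rfl⟩ := f.exists_of_lt_rank x r hr
    have hy : (y : α) ∉ S := by
      rw [mem_iff_of_lastSection_eq hf, hsec, ← mem_iff_of_lastSection_eq hf]
      exact x.2
    exact ⟨⟨y, hy⟩, by simp [hsec], rfl⟩

def lastSectionFiberEquiv (S : Finset α) :
    { f : BarredArrangement (m + 1) α // f.lastSection = S } ≃
      BarredArrangement 0 S × BarredArrangement m {x // x ∉ S} where
  toFun f := (f.1.restrictLast f.2, f.1.restrictInit f.2)
  invFun gh := ⟨glueLast gh.1 gh.2, lastSection_glueLast gh.1 gh.2⟩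
  left_inv f := by
    obtain ⟨f, hf⟩ := f
    ext x
    · by_cases hx : x ∈ S
      · simp [glueLast, hx, (mem_iff_of_lastSection_eq hf).1 hx]
      · simp [glueLast, restrictInit, hx]
    · simp [glueLast, restrictLast, restrictInit]
  right_inv gh := by
    ext x <;> simp [glueLast, restrictLast, restrictInit, x.2]

lemma natCard_succ :
    Nat.card (BarredArrangement (m + 1) α) = binomConv (bpa 0) (bpa m) (Fintype.card α) := by
  rw [← Nat.card_congr (Equiv.sigmaFiberEquiv lastSection), Nat.card_sigma]
  simp_rw [Nat.card_congr (lastSectionFiberEquiv _), Nat.card_prod, natCard_eq_bpa,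
    Fintype.card_subtype_compl, Fintype.card_coe]
  rw [sum_univ_card_card_sub (fun i j => bpa 0 i * bpa m j), binomConv]
  simp [mul_assoc]

end LastSection

end BarredArrangement

lemma bpa_succ (m n : ℕ) : bpa (m + 1) n = binomConv (bpa 0) (bpa m) n := by
  simpa using (BarredArrangement.natCard_eq_bpa (m := m + 1) (α := Fin n)).symm.trans
    BarredArrangement.natCard_succ

namespace BarredArrangement

variable {α : Type*} [Fintype α] {S : Finset α}

def firstBlock (f : BarredArrangement 0 α) : Finset α := {x | f.rank x = 0}

lemma mem_iff_of_firstBlock_eq {f : BarredArrangement 0 α} (hf : f.firstBlock = S) {x : α} :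
    x ∈ S ↔ f.rank x = 0 := by
  simp [← hf, firstBlock]

lemma firstBlock_nonempty [Nonempty α] (f : BarredArrangement 0 α) : f.firstBlock.Nonempty := by
  obtain ⟨x⟩ := ‹Nonempty α›
  rcases Nat.eq_zero_or_pos (f.rank x) with h | h
  · exact ⟨x, by simp [firstBlock, h]⟩
  · obtain ⟨y, -, hy⟩ := f.exists_of_lt_rank x 0 h
    exact ⟨y, by simp [firstBlock, hy]⟩

variable [DecidableEq α]

def consBlock (hS : S.Nonempty) (h : BarredArrangement 0 {x // x ∉ S}) :
    BarredArrangement 0 α where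
  sec _ := 0
  rank x := if hx : x ∈ S then 0 else h.rank ⟨x, hx⟩ + 1
  exists_of_lt_rank x r hr := by
    by_cases hx : x ∈ S
    · simp [hx] at hr
    · simp only [hx, dite_false] at hr
      cases r with
      | zero =>
        obtain ⟨s, hs⟩ := hS
        exact ⟨s, rfl, by simp [hs]⟩
      | succ r =>
        obtain ⟨y, -, hy⟩ := h.exists_of_lt_rank ⟨x, hx⟩ r (by omega)
        exact ⟨y, rfl, by simp [y.2, hy]⟩

lemma firstBlock_consBlock (hS : S.Nonempty) (h : BarredArrangement 0 {x // x ∉ S}) :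
    (consBlock hS h).firstBlock = S := by
  ext x
  by_cases hx : x ∈ S <;> simp [firstBlock, consBlock, hx]

def dropFirstBlock (f : BarredArrangement 0 α) (hf : f.firstBlock = S) :
    BarredArrangement 0 {x // x ∉ S} where
  sec _ := 0
  rank x := f.rank x - 1
  exists_of_lt_rank x r hr := by
    have hx : f.rank x ≠ 0 := fun h => x.2 ((mem_iff_of_firstBlock_eq hf).2 h)
    obtain ⟨y, -, hy⟩ := f.exists_of_lt_rank x (r + 1) (by omega)
    exact ⟨⟨y, by simp [mem_iff_of_firstBlock_eq hf, hy]⟩, rfl, by simp [hy]⟩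

def firstBlockFiberEquiv (hS : S.Nonempty) :
    { f : BarredArrangement 0 α // f.firstBlock = S } ≃ BarredArrangement 0 {x // x ∉ S} where
  toFun f := f.1.dropFirstBlock f.2
  invFun h := ⟨consBlock hS h, firstBlock_consBlock hS h⟩
  left_inv f := by
    obtain ⟨f, hf⟩ := f
    ext x
    · simp [consBlock]
    · by_cases hx : x ∈ S
      · simp [consBlock, hx, (mem_iff_of_firstBlock_eq hf).1 hx]
      · have := (mem_iff_of_firstBlock_eq hf).not.1 hx
        simp [consBlock, dropFirstBlock, hx]
        omega
  right_inv h := by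
    ext x <;> simp [consBlock, dropFirstBlock, x.2]

lemma natCard_firstBlock_fiber [Nonempty α] (S : Finset α) :
    Nat.card { f : BarredArrangement 0 α // f.firstBlock = S } =
      if #S = 0 then 0 else bpa 0 (Fintype.card α - #S) := by
  split_ifs with hS
  · rw [card_eq_zero.1 hS, Nat.card_eq_zero]
    exact Or.inl ⟨fun f => (f.2 ▸ f.1.firstBlock_nonempty).ne_empty rfl⟩
  · rw [Nat.card_congr (firstBlockFiberEquiv (card_ne_zero.1 hS)), natCard_eq_bpa,
      Fintype.card_subtype_compl, Fintype.card_coe]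

end BarredArrangement

lemma bpa_zero_succ (n : ℕ) :
    bpa 0 (n + 1) = ∑ p ∈ antidiagonal n, (n + 1).choose (p.1 + 1) * bpa 0 p.2 := by
  rw [← Fintype.card_fin (n + 1), ← BarredArrangement.natCard_eq_bpa,
    ← Nat.card_congr (Equiv.sigmaFiberEquiv BarredArrangement.firstBlock), Nat.card_sigma]
  simp_rw [BarredArrangement.natCard_firstBlock_fiber]
  rw [sum_univ_card_card_sub (fun i j => if i = 0 then 0 else bpa 0 j), Fintype.card_fin,
    Nat.sum_antidiagonal_succ]
  simp

lemma binomConv_one_bpa_zero_succ (n : ℕ) :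
    binomConv (fun _ => 1) (bpa 0) (n + 1) = 2 * bpa 0 (n + 1) := by
  rw [binomConv, Nat.sum_antidiagonal_succ, bpa_zero_succ, two_mul]
  simp

section EGF

variable {𝕂 : Type*}

def egfTerm [DivisionRing 𝕂] (a : ℕ → 𝕂) (z : 𝕂) (n : ℕ) : 𝕂 := a n * z ^ n / n !

lemma egfTerm_binomConv [Field 𝕂] [CharZero 𝕂] (a b : ℕ → 𝕂) (z : 𝕂) (n : ℕ) :
    egfTerm (binomConv a b) z n = ∑ p ∈ antidiagonal n, egfTerm a z p.1 * egfTerm b z p.2 := by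
  rw [egfTerm, binomConv, sum_mul, sum_div]
  refine sum_congr rfl fun p hp => ?_
  obtain rfl := mem_antidiagonal.mp hp
  have := (p.1 + p.2).factorial_ne_zero
  rw [Nat.cast_add_choose, egfTerm, egfTerm, pow_add]
  field_simp

variable [NormedField 𝕂] [CharZero 𝕂] {a b : ℕ → 𝕂} {z : 𝕂}

lemma summable_norm_egfTerm_binomConv (ha : Summable (‖egfTerm a z ·‖))
    (hb : Summable (‖egfTerm b z ·‖)) : Summable (‖egfTerm (binomConv a b) z ·‖) := by
  simpa only [egfTerm_binomConv] using summable_norm_sum_mul_antidiagonal_of_summable_norm ha hb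

lemma hasSum_egfTerm_binomConv [CompleteSpace 𝕂] (ha : Summable (‖egfTerm a z ·‖))
    (hb : Summable (‖egfTerm b z ·‖)) :
    HasSum (egfTerm (binomConv a b) z) ((∑' n, egfTerm a z n) * ∑' n, egfTerm b z n) := by
  rw [tsum_mul_tsum_eq_tsum_sum_antidiagonal_of_summable_norm ha hb]
  simp_rw [← egfTerm_binomConv]
  exact (summable_norm_egfTerm_binomConv ha hb).of_norm.hasSum

end EGF

lemma hasSum_egfTerm_one (z : ℂ) : HasSum (egfTerm (fun _ => 1) z) (Complex.exp z) := by
  have : egfTerm (fun _ => 1) z = fun n => z ^ n / n ! := funext fun n => by simp [egfTerm]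
  rw [this, Complex.exp_eq_exp_ℂ]
  exact NormedSpace.expSeries_div_hasSum_exp z

lemma summable_norm_egfTerm_one (z : ℂ) : Summable (‖egfTerm (fun _ => 1) z ·‖) := by
  simpa [egfTerm, norm_div, norm_pow] using Real.summable_pow_div_factorial ‖z‖

lemma bpa_zero_le (n : ℕ) : (bpa 0 n : ℝ) ≤ n ! / Real.log 2 ^ n := by
  set L := Real.log 2
  have hL : 0 < L := Real.log_pos one_lt_two
  induction n using Nat.strong_induction_on with
  | _ n ih =>
    rcases n with _ | n
    · simp [bpa_zero_right]
    have hexp : ∑ k ∈ range (n + 1), L ^ (k + 1) / (k + 1)! ≤ 1 := by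
      have h := Real.sum_le_exp_of_nonneg hL.le (n + 2)
      rw [sum_range_succ', Real.exp_log two_pos] at h
      simp only [pow_zero, Nat.factorial_zero, Nat.cast_one, div_one] at h
      linarith
    calc (bpa 0 (n + 1) : ℝ)
        = ∑ p ∈ antidiagonal n, ((n + 1).choose (p.1 + 1) : ℝ) * bpa 0 p.2 := by
          rw [bpa_zero_succ]; push_cast; rfl
      _ ≤ ∑ p ∈ antidiagonal n, ((n + 1).choose (p.1 + 1) : ℝ) * (p.2 ! / L ^ p.2) := by
          gcongr with p hp
          have := mem_antidiagonal.mp hp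
          exact ih _ (by omega)
      _ = (n + 1)! / L ^ (n + 1) * ∑ k ∈ range (n + 1), L ^ (k + 1) / (k + 1)! := by
          rw [← Nat.sum_antidiagonal_eq_sum_range_succ (fun i _ => L ^ (i + 1) / (i + 1)!),
            mul_sum]
          refine sum_congr rfl fun p hp => ?_
          obtain rfl := mem_antidiagonal.mp hp
          have := (p.1 + 1 + p.2).factorial_ne_zero
          rw [show p.1 + p.2 + 1 = p.1 + 1 + p.2 by omega, Nat.cast_add_choose, pow_add]
          field_simp
      _ ≤ (n + 1)! / L ^ (n + 1) := mul_le_of_le_one_right (by positivity) hexp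

lemma summable_norm_egfTerm_bpa_zero {z : ℂ} (hz : ‖z‖ < Real.log 2) :
    Summable (‖egfTerm (fun n => (bpa 0 n : ℂ)) z ·‖) := by
  have hL : 0 < Real.log 2 := Real.log_pos one_lt_two
  refine (summable_geometric_of_lt_one (by positivity) ((div_lt_one hL).2 hz)).of_nonneg_of_le
    (fun n => norm_nonneg _) fun n => ?_
  rw [egfTerm, norm_div, norm_mul, norm_pow, Complex.norm_natCast, Complex.norm_natCast, div_pow,
    div_le_div_iff₀ (by positivity) (by positivity)]
  calc (bpa 0 n : ℝ) * ‖z‖ ^ n * Real.log 2 ^ n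
      ≤ n ! / Real.log 2 ^ n * ‖z‖ ^ n * Real.log 2 ^ n := by gcongr; exact bpa_zero_le n
    _ = ‖z‖ ^ n * n ! := by field_simp

lemma cast_bpa_succ {R : Type*} [Semiring R] (m : ℕ) :
    (fun n => (bpa (m + 1) n : R)) = binomConv (fun n => (bpa 0 n : R)) (fun n => (bpa m n : R)) :=
  funext fun n => by simp [bpa_succ]

lemma summable_norm_egfTerm_bpa (m : ℕ) {z : ℂ} (hz : ‖z‖ < Real.log 2) :
    Summable (‖egfTerm (fun n => (bpa m n : ℂ)) z ·‖) := by
  induction m with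
  | zero => exact summable_norm_egfTerm_bpa_zero hz
  | succ m ih =>
    rw [cast_bpa_succ]
    exact summable_norm_egfTerm_binomConv (summable_norm_egfTerm_bpa_zero hz) ih

lemma two_sub_exp_ne_zero {z : ℂ} (hz : ‖z‖ < Real.log 2) : 2 - Complex.exp z ≠ 0 := by
  rw [← Real.exp_lt_exp, Real.exp_log two_pos] at hz
  refine sub_ne_zero.2 fun h => ?_
  have := Complex.norm_exp_le_exp_norm z
  rw [← h, Complex.norm_two] at this
  linarith

lemma hasSum_egfTerm_bpa_zero {z : ℂ} (hz : ‖z‖ < Real.log 2) :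
    HasSum (egfTerm (fun n => (bpa 0 n : ℂ)) z) (1 / (2 - Complex.exp z)) := by
  set F := egfTerm (fun n => (bpa 0 n : ℂ)) z
  have hF := summable_norm_egfTerm_bpa_zero hz
  have hconv := hasSum_egfTerm_binomConv (summable_norm_egfTerm_one z) hF
  rw [(hasSum_egfTerm_one z).tsum_eq] at hconv
  have hterm : egfTerm (binomConv (fun _ => 1) fun n => (bpa 0 n : ℂ)) z =
      fun n => 2 * F n - if n = 0 then 1 else 0 := by
    funext n
    cases n with
    | zero => norm_num [F, egfTerm, binomConv, bpa_zero_right]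
    | succ n =>
      have h := congrArg (fun k : ℕ => (k : ℂ)) (binomConv_one_bpa_zero_succ n)
      simp only [Nat.cast_binomConv, Nat.cast_mul, Nat.cast_ofNat, Nat.cast_one] at h
      simp only [F, egfTerm, h, Nat.add_one_ne_zero, if_false, sub_zero]
      ring
  have hsum : Complex.exp z * ∑' n, F n = 2 * ∑' n, F n - 1 :=
    (hterm ▸ hconv).unique ((hF.of_norm.hasSum.mul_left 2).sub (hasSum_ite_eq 0 1))
  have hne := two_sub_exp_ne_zero hz
  have hT : ∑' n, F n = 1 / (2 - Complex.exp z) := by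
    rw [eq_div_iff hne]
    linear_combination -hsum
  exact hT ▸ hF.of_norm.hasSum

/-- For every `m ≥ 0` and every complex `z` with `|z| < log 2`, the series
`∑_{ℓ ≥ 0} r_{m,ℓ} · z^ℓ / ℓ!` converges, with sum `1 / (2 - e^z)^{m+1}`. -/
theorem bpa_egf (m : ℕ) (z : ℂ) (hz : ‖z‖ < Real.log 2) :
    HasSum (fun ℓ : ℕ => (bpa m ℓ : ℂ) * z ^ ℓ / (Nat.factorial ℓ : ℂ))
      (1 / (2 - Complex.exp z) ^ (m + 1)) := by
  change HasSum (egfTerm (fun n => (bpa m n : ℂ)) z) _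
  induction m with
  | zero => simpa using hasSum_egfTerm_bpa_zero hz
  | succ m ih =>
    have h := hasSum_egfTerm_binomConv (summable_norm_egfTerm_bpa 0 hz)
      (summable_norm_egfTerm_bpa m hz)
    rw [(hasSum_egfTerm_bpa_zero hz).tsum_eq, ih.tsum_eq, ← cast_bpa_succ, div_mul_div_comm,
      one_mul, ← pow_succ'] at h
    exact h
end

section
/- For every integer m ≥ 0 and every integer ℓ ≥ 0, s_{m,ℓ} = (m+1)! · ∑_{j=0}^{ℓ} C(ℓ,j) · S(j, m+1) · r_{m, ℓ-j}, where C(ℓ,j) is the binomial coefficient and S(j,m+1) is the Stirling number of the second kind. -/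
/-- `IsSBPA m ℓ f` : `f` encodes a *special* barred preferential arrangement, i.e. a barred
preferential arrangement in which every section is nonempty. -/
def IsSBPA (m ℓ : ℕ) (f : Fin ℓ → Fin (m + 1) × Fin ℓ) : Prop :=
  IsBPA m ℓ f ∧ ∀ j : Fin (m + 1), ∃ x : Fin ℓ, (f x).1 = j

instance (m ℓ : ℕ) : DecidablePred (IsSBPA m ℓ) := fun f => by unfold IsSBPA; infer_instance

/-- `sbpa m ℓ` : the number of special barred preferential arrangements of `[ℓ]` with `m` bars. -/
def sbpa (m ℓ : ℕ) : ℕ :=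
  Fintype.card { f : Fin ℓ → Fin (m + 1) × Fin ℓ // IsSBPA m ℓ f }

/-- The Stirling numbers of the second kind, `S(n, k)`: the number of partitions of an
`n`-element set into `k` nonempty blocks. -/
def stirling2 : ℕ → ℕ → ℕ
  | 0, 0 => 1
  | 0, _ + 1 => 0
  | _ + 1, 0 => 0
  | n + 1, k + 1 => (k + 1) * stirling2 n (k + 1) + stirling2 n k

open Finset Function

/-! In a special barred preferential arrangement every section is nonempty, hence so is its
first block. Removing the first blocks (the set `A` of rank-zero elements) and lowering all other
ranks by one leaves an arbitrary barred preferential arrangement of the complement of `A` with the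
same bars, while the first blocks themselves are a surjection from `A` onto the `m + 1` sections.
Surjections are counted by `(m+1)! S(|A|, m+1)` (remove one element of the domain), and
summing over `A` by its size gives the formula. -/

theorem stirling2_eq_stirlingSecond : ∀ n k, stirling2 n k = Nat.stirlingSecond n k
  | 0, 0 | 0, _ + 1 | _ + 1, 0 => rfl
  | n + 1, k + 1 => by
    rw [stirling2, Nat.stirlingSecond_succ_succ, stirling2_eq_stirlingSecond n (k + 1),
      stirling2_eq_stirlingSecond n k]

section Surjections

universe u
variable {α β : Type*}

def rangeEqEquivSurjective (s : Set β) :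
    {g : α → β // Set.range g = s} ≃ {g : α → s // Surjective g} where
  toFun g := ⟨Set.codRestrict g.1 s fun a => g.2.subset (Set.mem_range_self a),
    fun ⟨b, hb⟩ => by
      obtain ⟨a, rfl⟩ := g.2.symm.subset hb
      exact ⟨a, rfl⟩⟩
  invFun g := ⟨Subtype.val ∘ g.1, by rw [Set.range_comp, g.2.range_eq, Set.image_univ,
    Subtype.range_coe]⟩
  left_inv _ := rfl
  right_inv _ := rfl

theorem Set.insert_eq_univ_iff {s : Set β} {b : β} :
    insert b s = Set.univ ↔ s = Set.univ ∨ s = {b}ᶜ := by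
  simp only [Set.ext_iff, Set.mem_insert_iff, Set.mem_compl_singleton_iff]
  by_cases hb : b ∈ s <;> grind

theorem surjective_cons_iff {n : ℕ} {b : β} {g : Fin n → β} :
    Surjective (Fin.cons b g : Fin (n + 1) → β) ↔ Surjective g ∨ Set.range g = {b}ᶜ := by
  rw [← Set.range_eq_univ, ← Set.range_eq_univ, Fin.range_cons, Set.insert_eq_univ_iff]

theorem natCard_surjective_fin_succ [Fintype β] (n : ℕ) :
    Nat.card {f : Fin (n + 1) → β // Surjective f} =
      Nat.card β * Nat.card {g : Fin n → β // Surjective g} +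
        ∑ b : β, Nat.card {g : Fin n → ({b}ᶜ : Set β) // Surjective g} := by
  classical
  have hsplit (b : β) : {g : Fin n → β // Surjective (Fin.cons b g : Fin (n + 1) → β)} ≃
      {g : Fin n → β // Surjective g} ⊕ {g : Fin n → ({b}ᶜ : Set β) // Surjective g} := by
    refine (Equiv.subtypeEquivRight fun _ => surjective_cons_iff).trans <|
      (subtypeOrEquiv _ _ ?_).trans (Equiv.sumCongr (Equiv.refl _) (rangeEqEquivSurjective _))
    intro r hsurj hrange g hg
    have hb : b ∈ Set.range g := hsurj g hg b
    exact (hrange g hg ▸ hb : b ∈ ({b}ᶜ : Set β)) rfl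
  calc Nat.card {f : Fin (n + 1) → β // Surjective f}
      = Nat.card (Σ b : β, {g : Fin n → β // Surjective (Fin.cons b g : Fin (n + 1) → β)}) :=
        Nat.card_congr <| ((Fin.consEquiv fun _ => β).symm.subtypeEquiv fun f => by
          simp [Fin.cons_self_tail]).trans (Equiv.subtypeProdEquivSigmaSubtype fun b g => _)
    _ = _ := by
        rw [Nat.card_sigma]
        simp only [Nat.card_congr (hsplit _), Nat.card_sum, Finset.sum_add_distrib]
        simp

open Nat in
theorem natCard_surjective_fin (n : ℕ) : ∀ (β : Type u) [Finite β],
    Nat.card {f : Fin n → β // Surjective f} = (Nat.card β)! * stirlingSecond n (Nat.card β) := by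
  induction n with
  | zero =>
    intro β _
    cases isEmpty_or_nonempty β
    · have : ∀ f : Fin 0 → β, Surjective f := fun _ b => isEmptyElim b
      simp [Nat.card_congr (Equiv.subtypeUnivEquiv this)]
    · have : IsEmpty {f : Fin 0 → β // Surjective f} :=
        ⟨fun f => by obtain ⟨i, -⟩ := f.2 (Classical.arbitrary β); exact i.elim0⟩
      obtain ⟨k, hk⟩ := Nat.exists_eq_add_one_of_ne_zero (Nat.card_ne_zero.2 ⟨‹_›, ‹_›⟩)
      simp [hk]
  | succ n ih =>
    intro β _
    cases isEmpty_or_nonempty β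
    · simp
    · have := Fintype.ofFinite β
      obtain ⟨k, hk⟩ := Nat.exists_eq_add_one_of_ne_zero (Nat.card_ne_zero.2 ⟨‹_›, ‹_›⟩)
      have hcompl (b : β) : Nat.card ({b}ᶜ : Set β) = k := by
        rw [Nat.card_coe_set_eq, Set.ncard_compl, Set.ncard_singleton, hk, Nat.add_sub_cancel]
      simp only [natCard_surjective_fin_succ, ih, hcompl, hk, Finset.sum_const, Finset.card_univ,
        ← Nat.card_eq_fintype_card, smul_eq_mul, factorial_succ, stirlingSecond_succ_succ]
      ring

open Nat in
theorem natCard_surjective (α β : Type*) [Finite α] [Finite β] :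
    Nat.card {f : α → β // Surjective f} =
      (Nat.card β)! * Nat.stirlingSecond (Nat.card α) (Nat.card β) := by
  rw [← natCard_surjective_fin]
  exact Nat.card_congr <| (Equiv.arrowCongr (Finite.equivFin α) (Equiv.refl β)).subtypeEquiv
    fun f => (Surjective.of_comp_iff f (Finite.equivFin α).symm.surjective).symm

end Surjections

section BarredArrangements

variable {α β σ : Type*}

-- `IsBPA` over an arbitrary ground type, with ranks in `ℕ`; the bound on ranks is `rank_lt_card`.
def IsBarredArrangement (f : α → σ × ℕ) : Prop :=
  ∀ x, ∀ r < (f x).2, ∃ y, (f y).1 = (f x).1 ∧ (f y).2 = r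

namespace IsBarredArrangement

variable {f : α → σ × ℕ}

theorem rank_lt_card [Fintype α] (hf : IsBarredArrangement f) (x : α) :
    (f x).2 < Fintype.card α := by
  have hsub : range ((f x).2 + 1) ⊆ univ.image fun y => (f y).2 := by
    intro r hr
    rcases (Nat.lt_succ_iff.1 (mem_range.1 hr)).lt_or_eq with hlt | rfl
    · obtain ⟨y, -, hy⟩ := hf x r hlt
      exact mem_image.2 ⟨y, mem_univ y, hy⟩
    · exact mem_image.2 ⟨x, mem_univ x, rfl⟩
  have := (card_le_card hsub).trans card_image_le
  rwa [card_range, card_univ, Nat.succ_le_iff] at this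

theorem comp (hf : IsBarredArrangement f) {e : β → α} (he : Surjective e) :
    IsBarredArrangement (f ∘ e) := by
  intro x r hr
  obtain ⟨y, hy⟩ := hf (e x) r hr
  obtain ⟨y, rfl⟩ := he y
  exact ⟨y, hy⟩

end IsBarredArrangement

def IsSpecialBarredArrangement (f : α → σ × ℕ) : Prop :=
  IsBarredArrangement f ∧ Surjective (Prod.fst ∘ f)

theorem natCard_isBarredArrangement_congr (e : α ≃ β) :
    Nat.card {f : α → σ × ℕ // IsBarredArrangement f} =
      Nat.card {f : β → σ × ℕ // IsBarredArrangement f} :=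
  Nat.card_congr <| (Equiv.arrowCongr e (Equiv.refl _)).subtypeEquiv fun f =>
    ⟨fun hf => hf.comp e.symm.surjective, fun hf => by simpa [comp_def] using hf.comp e.surjective⟩

instance [Finite α] [Finite σ] : Finite {f : α → σ × ℕ // IsBarredArrangement f} := by
  have := Fintype.ofFinite α
  refine Finite.of_injective (β := α → σ × Fin (Fintype.card α))
    (fun f x => ((f.1 x).1, ⟨(f.1 x).2, f.2.rank_lt_card x⟩)) fun f g h => ?_
  have hx (x : α) := Prod.ext_iff.1 (congrFun h x)
  exact Subtype.ext <| funext fun x => Prod.ext (hx x).1 (Fin.val_eq_of_eq (hx x).2)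

end BarredArrangements

def isBPAEquiv (m ℓ : ℕ) (p : (Fin ℓ → Fin (m + 1)) → Prop) :
    {f : Fin ℓ → Fin (m + 1) × Fin ℓ // IsBPA m ℓ f ∧ p (Prod.fst ∘ f)} ≃
      {f : Fin ℓ → Fin (m + 1) × ℕ // IsBarredArrangement f ∧ p (Prod.fst ∘ f)} where
  toFun f := ⟨fun x => ((f.1 x).1, (f.1 x).2), fun x r hr => by
      obtain ⟨y, hy, hr'⟩ := f.2.1 x ⟨r, hr.trans (f.1 x).2.isLt⟩ hr
      exact ⟨y, hy, congrArg Fin.val hr'⟩, f.2.2⟩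
  invFun f := ⟨fun x => ((f.1 x).1, ⟨(f.1 x).2, by simpa using f.2.1.rank_lt_card x⟩),
    fun x r hr => by
      obtain ⟨y, hy, hr'⟩ := f.2.1 x r hr
      exact ⟨y, hy, Fin.ext hr'⟩, f.2.2⟩
  left_inv _ := rfl
  right_inv _ := rfl

theorem bpa_card_eq_natCard (m : ℕ) (α : Type*) [Fintype α] :
    bpa m (Fintype.card α) = Nat.card {f : α → Fin (m + 1) × ℕ // IsBarredArrangement f} := by
  rw [bpa, ← Nat.card_eq_fintype_card, natCard_isBarredArrangement_congr (Fintype.equivFin α)]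
  exact Nat.card_congr <| (Equiv.subtypeEquivRight fun _ => (and_true _).symm.to_iff).trans <|
    (isBPAEquiv m _ fun _ => True).trans (Equiv.subtypeEquivRight fun _ => (and_true _).to_iff)

theorem sbpa_eq_natCard (m ℓ : ℕ) :
    sbpa m ℓ = Nat.card {f : Fin ℓ → Fin (m + 1) × ℕ // IsSpecialBarredArrangement f} := by
  rw [sbpa, ← Nat.card_eq_fintype_card]
  exact Nat.card_congr (isBPAEquiv m ℓ Surjective)

section Decomposition

variable {α σ : Type*}

def rankZeroSet [Fintype α] (f : α → σ × ℕ) : Finset α := univ.filter fun x => (f x).2 = 0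

@[simp]
theorem mem_rankZeroSet [Fintype α] {f : α → σ × ℕ} {x : α} :
    x ∈ rankZeroSet f ↔ (f x).2 = 0 := by
  simp [rankZeroSet]

variable {A : Finset α} {f : α → σ × ℕ}

theorem surjective_fst_restrict [Fintype α] (hf : IsBarredArrangement f)
    (hs : Surjective (Prod.fst ∘ f)) (hA : rankZeroSet f = A) :
    Surjective fun a : A => (f a).1 := by
  subst hA
  intro c
  obtain ⟨x, rfl⟩ := hs c
  obtain ⟨y, hy, h0⟩ : ∃ y, (f y).1 = (f x).1 ∧ (f y).2 = 0 := by
    rcases Nat.eq_zero_or_pos (f x).2 with h | h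
    · exact ⟨x, rfl, h⟩
    · exact hf x 0 h
  exact ⟨⟨y, mem_rankZeroSet.2 h0⟩, hy⟩

theorem isBarredArrangement_shift [Fintype α] (hf : IsBarredArrangement f)
    (hA : rankZeroSet f = A) :
    IsBarredArrangement fun x : {x // x ∉ A} => ((f x).1, (f x).2 - 1) := by
  subst hA
  rintro ⟨x, hx⟩ r hr
  rw [mem_rankZeroSet] at hx
  obtain ⟨y, hy, hrank⟩ := hf x (r + 1) (by simp at hr; omega)
  exact ⟨⟨y, by simp [hrank]⟩, hy, by simp [hrank]⟩

variable [DecidableEq α]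

variable (A) in
def prependBlocks (s : A → σ) (g : {x // x ∉ A} → σ × ℕ) : α → σ × ℕ := fun x =>
  if h : x ∈ A then (s ⟨x, h⟩, 0) else ((g ⟨x, h⟩).1, (g ⟨x, h⟩).2 + 1)

variable {s : A → σ} {g : {x // x ∉ A} → σ × ℕ}

@[simp]
theorem prependBlocks_of_mem {x : α} (h : x ∈ A) : prependBlocks A s g x = (s ⟨x, h⟩, 0) :=
  dif_pos h

@[simp]
theorem prependBlocks_of_notMem {x : α} (h : x ∉ A) :
    prependBlocks A s g x = ((g ⟨x, h⟩).1, (g ⟨x, h⟩).2 + 1) :=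
  dif_neg h

theorem surjective_fst_prependBlocks (hs : Surjective s) :
    Surjective (Prod.fst ∘ prependBlocks A s g) := fun c => by
  obtain ⟨⟨a, ha⟩, rfl⟩ := hs c
  exact ⟨a, by simp [ha]⟩

theorem isBarredArrangement_prependBlocks (hs : Surjective s) (hg : IsBarredArrangement g) :
    IsBarredArrangement (prependBlocks A s g) := by
  intro x r hr
  by_cases hx : x ∈ A
  · simp [hx] at hr
  rw [prependBlocks_of_notMem hx] at hr ⊢
  rcases r with _ | r
  · obtain ⟨⟨a, ha⟩, hsec⟩ := hs (g ⟨x, hx⟩).1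
    exact ⟨a, by simp [ha, hsec]⟩
  · obtain ⟨⟨y, hy⟩, hsec, hrank⟩ := hg ⟨x, hx⟩ r (by omega)
    exact ⟨y, by simp [hy, hsec, hrank]⟩

variable [Fintype α]

theorem rankZeroSet_prependBlocks : rankZeroSet (prependBlocks A s g) = A := by
  ext x
  by_cases h : x ∈ A <;> simp [h]

theorem prependBlocks_restrict_shift (hA : rankZeroSet f = A) :
    prependBlocks A (fun a => (f a).1) (fun x => ((f x).1, (f x).2 - 1)) = f := by
  subst hA
  funext x
  by_cases h : (f x).2 = 0
  · rw [prependBlocks_of_mem (mem_rankZeroSet.2 h)]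
    exact Prod.ext rfl h.symm
  · rw [prependBlocks_of_notMem (mt mem_rankZeroSet.1 h)]
    exact Prod.ext rfl (Nat.sub_add_cancel (Nat.pos_of_ne_zero h))

variable (A) in
def rankZeroFiberEquiv :
    {f : {f : α → σ × ℕ // IsSpecialBarredArrangement f} // rankZeroSet f.1 = A} ≃
      {s : A → σ // Surjective s} × {g : {x // x ∉ A} → σ × ℕ // IsBarredArrangement g} where
  toFun f :=
    (⟨fun a => (f.1.1 a).1, surjective_fst_restrict f.1.2.1 f.1.2.2 f.2⟩,
      ⟨fun x => ((f.1.1 x).1, (f.1.1 x).2 - 1), isBarredArrangement_shift f.1.2.1 f.2⟩)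
  invFun sg :=
    ⟨⟨prependBlocks A sg.1.1 sg.2.1, isBarredArrangement_prependBlocks sg.1.2 sg.2.2,
      surjective_fst_prependBlocks sg.1.2⟩, rankZeroSet_prependBlocks⟩
  left_inv f := Subtype.ext <| Subtype.ext <| prependBlocks_restrict_shift f.2
  right_inv sg := Prod.ext (Subtype.ext <| funext fun a => by simp)
    (Subtype.ext <| funext fun x => by simp [prependBlocks_of_notMem x.2])

theorem natCard_isSpecialBarredArrangement [Finite σ] :
    Nat.card {f : α → σ × ℕ // IsSpecialBarredArrangement f} =
      ∑ A : Finset α, Nat.card {s : A → σ // Surjective s} *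
        Nat.card {g : {x // x ∉ A} → σ × ℕ // IsBarredArrangement g} := by
  have (A : Finset α) : Finite {f : {f : α → σ × ℕ // IsSpecialBarredArrangement f} //
      rankZeroSet f.1 = A} := Finite.of_equiv _ (rankZeroFiberEquiv A).symm
  rw [← Nat.card_congr (Equiv.sigmaFiberEquiv fun f => rankZeroSet f.1), Nat.card_sigma]
  simp only [Nat.card_congr (rankZeroFiberEquiv _), Nat.card_prod]

end Decomposition

/-- For every `m ≥ 0` and `ℓ ≥ 0`,
`s_{m,ℓ} = (m+1)! · ∑_{j=0}^{ℓ} C(ℓ,j) · S(j, m+1) · r_{m, ℓ-j}`. -/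
theorem sbpa_eq_factorial_mul_sum (m ℓ : ℕ) :
    sbpa m ℓ =
      Nat.factorial (m + 1) *
        ∑ j ∈ Finset.range (ℓ + 1), Nat.choose ℓ j * stirling2 j (m + 1) * bpa m (ℓ - j) := by
  have hfirst (A : Finset (Fin ℓ)) :
      Nat.card {s : A → Fin (m + 1) // Surjective s} =
        (m + 1).factorial * stirling2 #A (m + 1) := by
    rw [natCard_surjective, Nat.card_eq_finsetCard, Nat.card_fin, stirling2_eq_stirlingSecond]
  have hrest (A : Finset (Fin ℓ)) :
      Nat.card {g : {x // x ∉ A} → Fin (m + 1) × ℕ // IsBarredArrangement g} =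
        bpa m (ℓ - #A) := by
    rw [← bpa_card_eq_natCard, Fintype.card_subtype_compl, Fintype.card_fin, Fintype.card_coe]
  rw [sbpa_eq_natCard, natCard_isSpecialBarredArrangement, ← Finset.powerset_univ]
  simp only [hfirst, hrest, mul_assoc]
  rw [← Finset.mul_sum, sum_powerset_apply_card fun j => stirling2 j (m + 1) * bpa m (ℓ - j),
    Finset.card_univ, Fintype.card_fin]
  simp only [smul_eq_mul]
end

section
/- For every integer m ≥ 0 and every integer ℓ ≥ 1, r_{m,ℓ} = ∑_{k=0}^{m} C(m+1, k+1) · s_{k,ℓ}, where C(m+1,k+1) is the binomial coefficient. -/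
/-!
Sort barred preferential arrangements by their set `S` of occupied sections. Relabelling the
sections along the increasing bijection `Fin (k + 1) ≃ S` identifies the arrangements with
`#S = k + 1` with the special arrangements with `k` bars, and there are `C(m + 1, k + 1)` such
sets `S`. Since `ℓ ≥ 1`, no arrangement has `S = ∅`.
-/

open Finset Function

section OccupiedSections

variable {m k ℓ : ℕ}

def occupiedSections (f : Fin ℓ → Fin (m + 1) × Fin ℓ) : Finset (Fin (m + 1)) :=
  univ.image fun x => (f x).1

theorem occupiedSections_nonempty (hℓ : 1 ≤ ℓ) (f : Fin ℓ → Fin (m + 1) × Fin ℓ) :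
    (occupiedSections f).Nonempty :=
  ⟨_, mem_image_of_mem _ (mem_univ ⟨0, hℓ⟩)⟩

theorem isSBPA_iff_occupiedSections_eq_univ (g : Fin ℓ → Fin (k + 1) × Fin ℓ) :
    IsSBPA k ℓ g ↔ IsBPA k ℓ g ∧ occupiedSections g = univ := by
  simp [IsSBPA, occupiedSections, eq_univ_iff_forall]

theorem isBPA_relabel_iff {e : Fin (k + 1) → Fin (m + 1)} (he : Injective e)
    (g : Fin ℓ → Fin (k + 1) × Fin ℓ) :
    IsBPA m ℓ (Prod.map e id ∘ g) ↔ IsBPA k ℓ g := by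
  simp [IsBPA, he.eq_iff]

theorem occupiedSections_relabel (e : Fin (k + 1) → Fin (m + 1))
    (g : Fin ℓ → Fin (k + 1) × Fin ℓ) :
    occupiedSections (Prod.map e id ∘ g) = (occupiedSections g).image e := by
  simp only [occupiedSections, image_image]
  rfl

theorem relabel_injective {e : Fin (k + 1) → Fin (m + 1)} (he : Injective e) :
    Injective fun g : Fin ℓ → Fin (k + 1) × Fin ℓ => Prod.map e id ∘ g :=
  (he.prodMap injective_id).comp_left

theorem image_relabel_filter_isSBPA {e : Fin (k + 1) → Fin (m + 1)} (he : Injective e) :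
    (univ.filter (IsSBPA k ℓ)).image (fun g => Prod.map e id ∘ g) =
      univ.filter fun f : Fin ℓ → Fin (m + 1) × Fin ℓ =>
        IsBPA m ℓ f ∧ occupiedSections f = univ.image e := by
  ext f
  simp only [mem_image, mem_filter, mem_univ, true_and]
  constructor
  · rintro ⟨g, hg, rfl⟩
    rw [isSBPA_iff_occupiedSections_eq_univ] at hg
    rw [isBPA_relabel_iff he, occupiedSections_relabel, hg.2]
    exact ⟨hg.1, rfl⟩
  · rintro ⟨hf, hS⟩
    have hmem (x : Fin ℓ) : (f x).1 ∈ Set.range e := by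
      have hx : (f x).1 ∈ occupiedSections f := mem_image_of_mem _ (mem_univ x)
      rw [hS] at hx
      simpa using hx
    let g : Fin ℓ → Fin (k + 1) × Fin ℓ := fun x => (invFun e (f x).1, (f x).2)
    have hfg : Prod.map e id ∘ g = f := funext fun x => Prod.ext (invFun_eq (hmem x)) rfl
    refine ⟨g, ?_, hfg⟩
    rw [isSBPA_iff_occupiedSections_eq_univ, ← isBPA_relabel_iff he, ← image_inj he,
      ← occupiedSections_relabel, hfg]
    exact ⟨hf, hS⟩

theorem card_filter_occupiedSections_eq_sbpa {S : Finset (Fin (m + 1))} (hS : #S = k + 1) :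
    #{f : Fin ℓ → Fin (m + 1) × Fin ℓ | IsBPA m ℓ f ∧ occupiedSections f = S} =
      sbpa k ℓ := by
  rw [sbpa, Fintype.card_subtype, ← image_orderEmbOfFin_univ S hS,
    ← image_relabel_filter_isSBPA (S.orderEmbOfFin hS).injective,
    card_image_of_injective _ (relabel_injective (S.orderEmbOfFin hS).injective)]

theorem card_filter_occupiedSections_eq (hℓ : 1 ≤ ℓ) (S : Finset (Fin (m + 1))) :
    #{f : Fin ℓ → Fin (m + 1) × Fin ℓ | IsBPA m ℓ f ∧ occupiedSections f = S} =
      if #S = 0 then 0 else sbpa (#S - 1) ℓ := by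
  split_ifs with h0
  · rw [card_eq_zero, filter_eq_empty_iff, card_eq_zero.1 h0]
    exact fun f _ hf => (occupiedSections_nonempty hℓ f).ne_empty hf.2
  · exact card_filter_occupiedSections_eq_sbpa (Nat.sub_one_add_one h0).symm

end OccupiedSections

/-- For every `m ≥ 0` and `ℓ ≥ 1`,
`r_{m,ℓ} = ∑_{k=0}^{m} C(m+1, k+1) · s_{k,ℓ}`. -/
theorem bpa_eq_sum_sbpa (m ℓ : ℕ) (hℓ : 1 ≤ ℓ) :
    bpa m ℓ = ∑ k ∈ Finset.range (m + 1), Nat.choose (m + 1) (k + 1) * sbpa k ℓ := by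
  calc bpa m ℓ
      = ∑ S ∈ (univ : Finset (Fin (m + 1))).powerset,
          #{f : Fin ℓ → Fin (m + 1) × Fin ℓ | IsBPA m ℓ f ∧ occupiedSections f = S} := by
        rw [bpa, Fintype.card_subtype, powerset_univ,
          card_eq_sum_card_fiberwise (f := occupiedSections) fun _ _ => mem_univ _]
        simp only [filter_filter]
    _ = ∑ n ∈ range (m + 2), (m + 1).choose n * if n = 0 then 0 else sbpa (n - 1) ℓ := by
        simp only [card_filter_occupiedSections_eq hℓ]
        rw [sum_powerset_apply_card fun n => if n = 0 then 0 else sbpa (n - 1) ℓ]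
        simp only [card_univ, Fintype.card_fin, smul_eq_mul]
    _ = _ := by simp [sum_range_succ']
end

section
/- For every integer ℓ ≥ 1, the series ∑_{k ≥ 0} k^ℓ / 2^k converges and r_ℓ = (1/2) · ∑_{k ≥ 0} k^ℓ / 2^k. -/
/-!
Sorting the maps `[ℓ] → [k]` by their image gives `k ^ ℓ = ∑ⱼ C(k, j) sⱼ`, where `sⱼ` is the
number of surjections `[ℓ] → [j]`. As `∑ₖ C(k, j) xᵏ = xʲ / (1 - x) ^ (j + 1)`, every
`∑ₖ C(k, j) / 2 ^ k` equals `2`, so the series sums to `2 ∑ⱼ sⱼ`. On the other hand a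
preferential arrangement is the map sending each element to the rank of its block, whose image
is an initial segment `{0, …, j - 1}` of ranks; it is thus a surjection onto `[j]`, and
`r_ℓ = ∑ⱼ sⱼ`.
-/

open Finset

def surjCard (ℓ j : ℕ) : ℕ :=
  Fintype.card { g : Fin ℓ → Fin j // Function.Surjective g }

def imageEqEquivSurjective {α β : Type*} [Fintype α] [DecidableEq β] (s : Finset β) :
    { f : α → β // univ.image f = s } ≃ { g : α → s // Function.Surjective g } where
  toFun := fun ⟨f, hf⟩ => ⟨fun x => ⟨f x, hf ▸ mem_image_of_mem f (mem_univ x)⟩, fun b => by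
      obtain ⟨x, -, hx⟩ := mem_image.1 (hf ▸ b.2 : (b : β) ∈ univ.image f)
      exact ⟨x, Subtype.ext hx⟩⟩
  invFun g := ⟨fun x => g.1 x, by
    ext b
    refine ⟨fun hb => ?_, fun hb => ?_⟩
    · obtain ⟨x, -, rfl⟩ := mem_image.1 hb
      exact (g.1 x).2
    · obtain ⟨x, hx⟩ := g.2 ⟨b, hb⟩
      exact mem_image.2 ⟨x, mem_univ x, by rw [hx]⟩⟩
  left_inv _ := rfl
  right_inv _ := rfl

lemma card_filter_image_univ_eq {ℓ : ℕ} {β : Type*} [Fintype β] [DecidableEq β] (s : Finset β) :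
    #{f : Fin ℓ → β | univ.image f = s} = surjCard ℓ #s := by
  rw [← Fintype.card_subtype, Fintype.card_congr (imageEqEquivSurjective s), surjCard]
  exact Fintype.card_congr <| ((Equiv.refl _).arrowCongr s.equivFin).subtypeEquiv fun g =>
    (EquivLike.comp_surjective g s.equivFin).symm

lemma card_filter_image_univ_mem {ℓ : ℕ} {β : Type*} [Fintype β] [DecidableEq β]
    (t : Finset (Finset β)) :
    #{f : Fin ℓ → β | univ.image f ∈ t} = ∑ s ∈ t, surjCard ℓ #s := by
  rw [card_eq_sum_card_fiberwise (s := {f : Fin ℓ → β | univ.image f ∈ t})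
    (f := fun f => univ.image f) fun f hf => (mem_filter.1 hf).2]
  refine sum_congr rfl fun s hs => ?_
  rw [← card_filter_image_univ_eq, filter_filter]
  congr 1
  ext f
  simp only [mem_filter, mem_univ, true_and, and_iff_right_iff_imp]
  rintro rfl; exact hs

lemma surjCard_eq_zero_of_lt {ℓ j : ℕ} (h : ℓ < j) : surjCard ℓ j = 0 := by
  rw [surjCard, Fintype.card_eq_zero_iff]
  exact ⟨fun g => absurd (Fintype.card_le_of_surjective g.1 g.2) (by simpa using h)⟩

lemma pow_eq_sum_choose_mul_surjCard (ℓ k : ℕ) :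
    k ^ ℓ = ∑ j ∈ range (ℓ + 1), k.choose j * surjCard ℓ j := by
  have hfiber : k ^ ℓ = ∑ j ∈ range (k + 1), k.choose j * surjCard ℓ j :=
    calc k ^ ℓ = #{f : Fin ℓ → Fin k | univ.image f ∈ univ.powerset} := by simp
      _ = ∑ s ∈ univ.powerset, surjCard ℓ #s := card_filter_image_univ_mem _
      _ = ∑ j ∈ range (k + 1), k.choose j * surjCard ℓ j := by
        rw [sum_powerset_apply_card, card_univ, Fintype.card_fin]; rfl
  have hvanish (j : ℕ) (hj : k < j ∨ ℓ < j) : k.choose j * surjCard ℓ j = 0 := by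
    rcases hj with h | h
    · rw [Nat.choose_eq_zero_of_lt h, zero_mul]
    · rw [surjCard_eq_zero_of_lt h, mul_zero]
  have hextend {n : ℕ} (h : min k ℓ ≤ n) :
      ∑ j ∈ range (min k ℓ + 1), k.choose j * surjCard ℓ j
        = ∑ j ∈ range (n + 1), k.choose j * surjCard ℓ j :=
    sum_subset (range_subset_range.2 (by omega)) fun j _ hj =>
      hvanish j (by simp only [mem_range] at hj; omega)
  rw [hfiber, ← hextend (min_le_left k ℓ),
    hextend (min_le_right k ℓ)]

def initialSegments (n : ℕ) : Finset (Finset (Fin n)) :=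
  (range (n + 1)).image fun j => ({i | (i : ℕ) < j} : Finset (Fin n))

lemma mem_initialSegments_iff {n : ℕ} {s : Finset (Fin n)} :
    s ∈ initialSegments n ↔ IsLowerSet (s : Set (Fin n)) := by
  constructor
  · rintro hs a b hba ha
    obtain ⟨j, -, rfl⟩ := mem_image.1 hs
    simp only [coe_filter, mem_univ, true_and, Set.mem_ofPred_eq] at ha ⊢
    exact lt_of_le_of_lt hba ha
  · intro hs
    refine mem_image.2 ⟨#s, mem_range.2 (Nat.lt_succ_of_le (by simpa using card_le_univ s)), ?_⟩
    ext i
    have hmem := Fin.lt_card_filter_univ_iff_apply_of_imp (j := i) (· ∈ s)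
      fun a b hba ha => hs hba ha
    rw [filter_mem_eq_inter, univ_inter] at hmem
    simpa using hmem

lemma isBPA_zero_iff {ℓ : ℕ} (f : Fin ℓ → Fin 1 × Fin ℓ) :
    IsBPA 0 ℓ f ↔ univ.image (fun x => (f x).2) ∈ initialSegments ℓ := by
  rw [mem_initialSegments_iff]
  constructor
  · intro h a b hba ha
    simp only [coe_image, coe_univ, Set.image_univ, Set.mem_range] at ha ⊢
    obtain ⟨x, rfl⟩ := ha
    rcases hba.lt_or_eq with hlt | rfl
    · obtain ⟨y, -, hy⟩ := h x b hlt
      exact ⟨y, hy⟩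
    · exact ⟨x, rfl⟩
  · intro h x r hr
    obtain ⟨y, -, hy⟩ := mem_image.1 (h hr.le (mem_image_of_mem _ (mem_univ x)))
    exact ⟨y, Subsingleton.elim (α := Fin 1) _ _, hy⟩

lemma bpa_zero_eq_card (ℓ : ℕ) :
    bpa 0 ℓ = #{g : Fin ℓ → Fin ℓ | univ.image g ∈ initialSegments ℓ} := by
  rw [bpa, ← Fintype.card_subtype]
  exact Fintype.card_congr <|
    ((Equiv.refl _).arrowCongr (Equiv.uniqueProd (Fin ℓ) (Fin 1))).subtypeEquiv isBPA_zero_iff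

lemma bpa_zero_eq_sum_surjCard (ℓ : ℕ) : bpa 0 ℓ = ∑ j ∈ range (ℓ + 1), surjCard ℓ j := by
  have hcard (j : ℕ) (hj : j ∈ range (ℓ + 1)) : #{i : Fin ℓ | (i : ℕ) < j} = j := by
    rw [Fin.card_filter_val_lt, min_eq_right (Nat.lt_succ_iff.1 (mem_range.1 hj))]
  rw [bpa_zero_eq_card, card_filter_image_univ_mem, initialSegments,
    sum_image fun i hi j hj hij => (hcard i hi).symm.trans ((congrArg card hij).trans (hcard j hj))]
  exact sum_congr rfl fun j hj => by rw [hcard j hj]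

lemma hasSum_choose_div_two_pow (j : ℕ) : HasSum (fun k : ℕ => (k.choose j : ℝ) / 2 ^ k) 2 := by
  have hr : ‖(2⁻¹ : ℝ)‖ < 1 := by norm_num
  have hshifted := (hasSum_choose_mul_geometric_of_norm_lt_one j hr).mul_left ((2⁻¹ : ℝ) ^ j)
  have hterm (n : ℕ) : (2⁻¹ : ℝ) ^ j * ((n + j).choose j * 2⁻¹ ^ n)
      = ((n + j).choose j : ℝ) / 2 ^ (n + j) := by
    rw [inv_pow, inv_pow, pow_add]; field_simp
  have hval : (2⁻¹ : ℝ) ^ j * (1 / (1 - 2⁻¹) ^ (j + 1)) = 2 := by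
    rw [show (1 : ℝ) - 2⁻¹ = 2⁻¹ by norm_num, pow_succ, inv_pow]; field_simp
  have hinit : ∑ i ∈ range j, (i.choose j : ℝ) / 2 ^ i = 0 :=
    sum_eq_zero fun i hi => by simp [Nat.choose_eq_zero_of_lt (mem_range.1 hi)]
  refine (hasSum_nat_add_iff' j).1 ?_
  rw [hinit, sub_zero]
  simpa only [hterm, hval] using hshifted

lemma hasSum_pow_div_two_pow (ℓ : ℕ) :
    HasSum (fun k : ℕ => (k : ℝ) ^ ℓ / 2 ^ k) (2 * bpa 0 ℓ) := by
  have hterm (k : ℕ) : (k : ℝ) ^ ℓ / 2 ^ k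
      = ∑ j ∈ range (ℓ + 1), (surjCard ℓ j : ℝ) * ((k.choose j : ℝ) / 2 ^ k) := by
    rw [show (k : ℝ) ^ ℓ = ∑ j ∈ range (ℓ + 1), (k.choose j : ℝ) * surjCard ℓ j by
      exact_mod_cast pow_eq_sum_choose_mul_surjCard ℓ k, sum_div]
    exact sum_congr rfl fun j _ => by ring
  have hsum := hasSum_sum fun j (_ : j ∈ range (ℓ + 1)) =>
    (hasSum_choose_div_two_pow j).mul_left (surjCard ℓ j : ℝ)
  rw [bpa_zero_eq_sum_surjCard, Nat.cast_sum, mul_sum]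
  simpa only [← hterm, mul_comm (2 : ℝ)] using hsum

theorem pa_eq_infinite_series_general (ℓ : ℕ) :
    Summable (fun k : ℕ => (k : ℝ) ^ ℓ / 2 ^ k) ∧
      (bpa 0 ℓ : ℝ) = (1 / 2) * ∑' k : ℕ, (k : ℝ) ^ ℓ / 2 ^ k := by
  have h := hasSum_pow_div_two_pow ℓ
  exact ⟨h.summable, by rw [h.tsum_eq]; ring⟩

/-- For every `ℓ ≥ 1`, the series `∑_{k ≥ 0} k^ℓ / 2^k` converges and
`r_ℓ = (1/2) · ∑_{k ≥ 0} k^ℓ / 2^k`. -/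
theorem pa_eq_infinite_series (ℓ : ℕ) (hℓ : 1 ≤ ℓ) :
    Summable (fun k : ℕ => (k : ℝ) ^ ℓ / 2 ^ k) ∧
      (bpa 0 ℓ : ℝ) = (1 / 2) * ∑' k : ℕ, (k : ℝ) ^ ℓ / 2 ^ k :=
  pa_eq_infinite_series_general ℓ
end
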